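/- arXiv:2412.13675 — 10 statements merged into one kernel-verified Lean document; each statement's English description precedes it below -/
import Mathlib

section
/- For n ≥ 1, ∑_{p=1}^{n} C(n-1, p-1)·2^{n-p} = 3^{n-1}. -/
open Finset

theorem sum_range_choose_mul_pow_sub {R : Type*} [CommSemiring R] (a : R) (m : ℕ) :
    ∑ k ∈ range (m + 1), m.choose k * a ^ (m - k) = (a + 1) ^ m := by
  simp [add_comm a, add_pow, mul_comm]

theorem schroeder_idempotent_count (n : ℕ) (hn : 1 ≤ n) :
    ∑ p ∈ Finset.Icc 1 n, Nat.choose (n - 1) (p - 1) * 2 ^ (n - p) = 3 ^ (n - 1) := by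
  obtain ⟨m, rfl⟩ := Nat.exists_eq_add_of_le' hn
  rw [← Ico_add_one_right_eq_Icc, sum_Ico_eq_sum_range]
  simpa [add_comm 1, Nat.add_sub_add_right] using sum_range_choose_mul_pow_sub (2 : ℕ) m
end

section
/- An element α of the large Schröder monoid LS_n is regular if and only if α is an idempotent (α² = α). -/
/-!
If `α` and `β` are both order-decreasing and `α β α = α`, then for `a = α x` we get
`β a = c` with `α c = a`, so `a ≤ c ≤ a`: every point of the image of `α` is fixed by `α`,
which is exactly idempotency. Conversely an idempotent `α` is its own inverse.
-/

/-- Partial transformations of the chain `Fin n`. -/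
abbrev PT (n : ℕ) := Fin n → Option (Fin n)

/-- Composition of partial transformations: apply `α` first, then `β`. -/
def comp {n : ℕ} (α β : PT n) : PT n := fun x => (α x).bind β

/-- `α` is isotone (order-preserving on its domain). -/
def IsIsotone {n : ℕ} (α : PT n) : Prop :=
  ∀ x y a b : Fin n, α x = some a → α y = some b → x ≤ y → a ≤ b

/-- `α` is order-decreasing on its domain. -/
def IsDecreasing {n : ℕ} (α : PT n) : Prop :=
  ∀ x a : Fin n, α x = some a → a ≤ x

/-- The large Schröder monoid: isotone, order-decreasing partial transformations. -/
def LS (n : ℕ) : Set (PT n) := {α | IsIsotone α ∧ IsDecreasing α}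

/-- The image of a partial transformation. -/
def Im {n : ℕ} (α : PT n) : Set (Fin n) := {y | ∃ x, α x = some y}

/-- The height of a partial transformation is the size of its image. -/
noncomputable def height {n : ℕ} (α : PT n) : ℕ := (Im α).ncard

/-- The kernel of `α`, as a set of pairs of elements of the domain. -/
def kerS {n : ℕ} (α : PT n) : Set (Fin n × Fin n) :=
  {p | ∃ a : Fin n, α p.1 = some a ∧ α p.2 = some a}

/-- The set of fixed points of `α`. -/
def FixPts {n : ℕ} (α : PT n) : Set (Fin n) := {x | α x = some x}

theorem comp_self_eq_self_iff_im_subset_fixPts {n : ℕ} (α : PT n) :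
    comp α α = α ↔ Im α ⊆ FixPts α := by
  constructor
  · rintro h a ⟨x, hx⟩
    have hαα := congrFun h x
    simpa [comp, hx, FixPts] using hαα
  · intro h
    funext x
    cases hx : α x with
    | none => simp [comp, hx]
    | some a => simpa [comp, hx, FixPts] using h ⟨x, hx⟩

theorem im_subset_fixPts_of_comp_comp_eq {n : ℕ} {α β : PT n} (hα : IsDecreasing α)
    (hβ : IsDecreasing β) (h : comp (comp α β) α = α) : Im α ⊆ FixPts α := by
  rintro a ⟨x, hx⟩
  have hαβα := congrFun h x
  simp only [comp, hx, Option.bind_some] at hαβα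
  obtain ⟨c, hβa, hαc⟩ := Option.bind_eq_some_iff.mp hαβα
  have hca : c = a := le_antisymm (hβ a c hβa) (hα c a hαc)
  subst hca
  exact hαc

theorem LS_regular_iff_idempotent (n : ℕ) (α : PT n) (hα : α ∈ LS n) :
    (∃ β ∈ LS n, comp (comp α β) α = α) ↔ comp α α = α := by
  constructor
  · rintro ⟨β, hβ, hαβα⟩
    exact (comp_self_eq_self_iff_im_subset_fixPts α).mpr
      (im_subset_fixPts_of_comp_comp_eq hα.2 hβ.2 hαβα)
  · intro hαα
    exact ⟨α, hα, by rw [hαα, hαα]⟩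
end

section
/- The large Schröder monoid LS_n is R-trivial: if α, β ∈ LS_n satisfy α = βγ and β = αδ for some γ, δ in LS_n ∪ {identity}, then α = β. -/
/-! Read `Option (Fin n)` as `WithBot (Fin n)`, "undefined" being the bottom element. Then
right multiplication by an order-decreasing `δ` can only lower a transformation pointwise, so
`α = β γ ≤ β = α δ ≤ α`. The order is spelled `@LE.le (WithBot (Fin n)) _`, since otherwise
Lean picks core's `LE (Option _)`, which carries no `PartialOrder`. -/

theorem IsDecreasing.comp_le {n : ℕ} {δ : PT n} (hδ : IsDecreasing δ) (α : PT n) (x : Fin n) :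
    @LE.le (WithBot (Fin n)) _ (comp α δ x) (α x) := by
  cases hx : α x with
  | none => simp only [comp, hx, Option.bind_none]; exact le_rfl
  | some a =>
    simp only [comp, hx, Option.bind_some]
    cases ha : δ a with
    | none => exact bot_le
    | some b => exact WithBot.coe_le_coe.mpr (hδ a b ha)

theorem LS_R_trivial_general (n : ℕ) (α β γ δ : PT n)
    (hγ : γ ∈ LS n) (hδ : δ ∈ LS n)
    (h1 : α = comp β γ) (h2 : β = comp α δ) : α = β := by
  funext x
  have hαβ : @LE.le (WithBot (Fin n)) _ (α x) (β x) := h1 ▸ hγ.2.comp_le β x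
  have hβα : @LE.le (WithBot (Fin n)) _ (β x) (α x) := h2 ▸ hδ.2.comp_le α x
  exact le_antisymm (α := WithBot (Fin n)) hαβ hβα

theorem LS_R_trivial (n : ℕ) (α β γ δ : PT n)
    (hα : α ∈ LS n) (hβ : β ∈ LS n) (hγ : γ ∈ LS n) (hδ : δ ∈ LS n)
    (h1 : α = comp β γ) (h2 : β = comp α δ) : α = β :=
  LS_R_trivial_general n α β γ δ hγ hδ h1 h2
end

section
/- For every α in the large Schröder monoid LS_n, there exists a partial transformation α' of [n] such that αα'α = α, and both α'α and αα' lie in LS_n; in particular α'α is the identity on Im α and αα' is an idempotent of LS_n. Hence LS_n is an inverse ideal of the partial transformation monoid P_n. -/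
/-!
Let `α'` send each `y ∈ Im α` to the least element of its preimage under `α`. Then `α'α` is the
partial identity on `Im α`, and `αα'` sends `x` to the least element of its kernel class, which
is at most `x`. For `y < y'` in `Im α`, isotony of `α` puts every preimage of `y` below every
preimage of `y'`, so `α'` is isotone as well, and hence so is `αα'`.
-/

section InverseIdeal

variable {n : ℕ}

theorem comp_assoc (α β γ : PT n) : comp (comp α β) γ = comp α (comp β γ) :=
  funext fun x => Option.bind_assoc (α x) β γ

theorem comp_idempotent_of_comp_comp_self {α β : PT n} (h : comp (comp α β) α = α) :
    comp (comp α β) (comp α β) = comp α β := by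
  rw [← comp_assoc, h]

theorem IsIsotone.comp {α β : PT n} (hα : IsIsotone α) (hβ : IsIsotone β) :
    IsIsotone (comp α β) := by
  intro x y a b ha hb hxy
  obtain ⟨c, hc, hca⟩ := Option.bind_eq_some_iff.mp ha
  obtain ⟨d, hd, hdb⟩ := Option.bind_eq_some_iff.mp hb
  exact hβ c d a b hca hdb (hα x y c d hc hd hxy)

def IsPartialId (β : PT n) : Prop := ∀ x a, β x = some a → a = x

theorem IsPartialId.mem_LS {β : PT n} (hβ : IsPartialId β) : β ∈ LS n := by
  refine ⟨fun x y a b ha hb hxy => ?_, fun x a ha => (hβ x a ha).le⟩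
  rwa [hβ x a ha, hβ y b hb]

def minPreimage (α : PT n) : PT n := fun y =>
  if h : ∃ x, α x = some y then some (Fin.find (fun x => α x = some y) h) else none

variable {α : PT n} {x y m : Fin n}

theorem minPreimage_eq_none (hy : y ∉ Im α) : minPreimage α y = none :=
  dif_neg hy

theorem apply_eq_of_minPreimage_eq_some (hm : minPreimage α y = some m) : α m = some y := by
  unfold minPreimage at hm
  split_ifs at hm with hy
  exact Option.some_injective _ hm ▸ Fin.find_spec hy

theorem exists_minPreimage_eq_some_le (hx : α x = some y) :
    ∃ m, minPreimage α y = some m ∧ m ≤ x :=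
  ⟨_, dif_pos ⟨x, hx⟩, Fin.find_le_of_pos (p := fun x => α x = some y) _ hx⟩

theorem IsIsotone.minPreimage (hα : IsIsotone α) : IsIsotone (minPreimage α) := by
  intro y y' m m' hm hm' hyy'
  have hαm := apply_eq_of_minPreimage_eq_some hm
  have hαm' := apply_eq_of_minPreimage_eq_some hm'
  rcases hyy'.eq_or_lt with rfl | hlt
  · exact (Option.some_injective _ (hm.symm.trans hm')).le
  · exact le_of_not_gt fun hm'm => hlt.not_ge (hα m' m y' y hαm' hαm hm'm.le)

theorem comp_comp_minPreimage_self (α : PT n) : comp (comp α (minPreimage α)) α = α := by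
  funext x
  cases hx : α x with
  | none => simp [comp, hx]
  | some y =>
    obtain ⟨m, hm, -⟩ := exists_minPreimage_eq_some_le hx
    simp [comp, hx, hm, apply_eq_of_minPreimage_eq_some hm]

theorem comp_minPreimage_self_of_mem (hx : x ∈ Im α) : comp (minPreimage α) α x = some x := by
  obtain ⟨z, hz⟩ := hx
  obtain ⟨m, hm, -⟩ := exists_minPreimage_eq_some_le hz
  simp [comp, hm, apply_eq_of_minPreimage_eq_some hm]

theorem comp_minPreimage_self_of_notMem (hx : x ∉ Im α) : comp (minPreimage α) α x = none := by
  simp [comp, minPreimage_eq_none hx]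

theorem isPartialId_comp_minPreimage_self (α : PT n) : IsPartialId (comp (minPreimage α) α) := by
  intro x a ha
  by_cases hx : x ∈ Im α
  · rw [comp_minPreimage_self_of_mem hx] at ha
    exact (Option.some_injective _ ha).symm
  · rw [comp_minPreimage_self_of_notMem hx] at ha
    exact absurd ha nofun

theorem isDecreasing_comp_self_minPreimage (α : PT n) : IsDecreasing (comp α (minPreimage α)) := by
  intro x m hm
  obtain ⟨y, hx, hy⟩ := Option.bind_eq_some_iff.mp hm
  obtain ⟨m', hm', hle⟩ := exists_minPreimage_eq_some_le hx
  exact (Option.some_injective _ (hm'.symm.trans hy)) ▸ hle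

end InverseIdeal

theorem LS_inverse_ideal (n : ℕ) (α : PT n) (hα : α ∈ LS n) :
    ∃ α' : PT n,
      comp (comp α α') α = α ∧
      comp α' α ∈ LS n ∧
      comp α α' ∈ LS n ∧
      (∀ x : Fin n, (x ∈ Im α → comp α' α x = some x) ∧ (x ∉ Im α → comp α' α x = none)) ∧
      comp (comp α α') (comp α α') = comp α α' :=
  ⟨minPreimage α, comp_comp_minPreimage_self α,
    (isPartialId_comp_minPreimage_self α).mem_LS,
    ⟨hα.1.comp hα.1.minPreimage, isDecreasing_comp_self_minPreimage α⟩,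
    fun _ => ⟨comp_minPreimage_self_of_mem, comp_minPreimage_self_of_notMem⟩,
    comp_idempotent_of_comp_comp_self (comp_comp_minPreimage_self α)⟩
end

section
/- Let α, β be elements of LS_n each of height exactly p (i.e., |Im α| = |Im β| = p). If the product αβ is an idempotent of height p, then both α and β are idempotents and αβ = α. -/
/-! A fixed point of `αβ` for order-decreasing `α, β` is fixed by both, since `x ≥ α x ≥ β (α x) = x`.
The image of the idempotent `αβ` is its set of fixed points, of size `p`; it lies inside the fixed
points, hence inside the image, of `α` and of `β`, both of size `p`. So `Im α = Im β = Fix(αβ)`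
consists of common fixed points of `α` and `β`, which makes `α α = α`, `β β = β` and `α β = α`. -/

variable {n : ℕ}

theorem fixPts_subset_Im (α : PT n) : FixPts α ⊆ Im α := fun x hx => ⟨x, hx⟩

theorem Im_eq_fixPts_of_comp_self {γ : PT n} (hγ : comp γ γ = γ) : Im γ = FixPts γ := by
  refine (fixPts_subset_Im γ).antisymm' ?_
  rintro y ⟨x, hx⟩
  have h := congrFun hγ x
  show γ y = some y
  simpa only [comp, hx, Option.bind_some] using h

theorem fixPts_comp_of_isDecreasing {α β : PT n} (hα : IsDecreasing α) (hβ : IsDecreasing β) :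
    FixPts (comp α β) = FixPts α ∩ FixPts β := by
  ext x
  simp only [FixPts, comp, Set.mem_ofPred_eq, Set.mem_inter_iff]
  constructor
  · intro hx
    obtain ⟨a, hαx, hβa⟩ := Option.bind_eq_some_iff.mp hx
    obtain rfl : a = x := le_antisymm (hα x a hαx) (hβ a x hβa)
    exact ⟨hαx, hβa⟩
  · rintro ⟨hαx, hβx⟩
    simp only [hαx, Option.bind_some, hβx]

theorem eq_Im_of_subset_fixPts_of_height_le {α : PT n} {S : Set (Fin n)} (hS : S ⊆ FixPts α)
    (hcard : height α ≤ S.ncard) : S = Im α :=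
  Set.eq_of_subset_of_ncard_le (hS.trans (fixPts_subset_Im α)) hcard

theorem comp_eq_left_of_Im_subset_fixPts {α β : PT n} (h : Im α ⊆ FixPts β) : comp α β = α := by
  funext x
  cases hαx : α x with
  | none => simp only [comp, hαx, Option.bind_none]
  | some a =>
    have hβa : β a = some a := h ⟨x, hαx⟩
    simp only [comp, hαx, Option.bind_some, hβa]

theorem LS_idempotent_product (n p : ℕ) (α β : PT n)
    (hα : α ∈ LS n) (hβ : β ∈ LS n)
    (hhα : height α = p) (hhβ : height β = p)
    (hidem : comp (comp α β) (comp α β) = comp α β)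
    (hh : height (comp α β) = p) :
    comp α α = α ∧ comp β β = β ∧ comp α β = α := by
  have hF := fixPts_comp_of_isDecreasing hα.2 hβ.2
  have hcard : (FixPts (comp α β)).ncard = p := by
    rw [← Im_eq_fixPts_of_comp_self hidem]; exact hh
  have hImα : FixPts (comp α β) = Im α :=
    eq_Im_of_subset_fixPts_of_height_le (hF ▸ Set.inter_subset_left) (by rw [hcard, hhα])
  have hImβ : FixPts (comp α β) = Im β :=
    eq_Im_of_subset_fixPts_of_height_le (hF ▸ Set.inter_subset_right) (by rw [hcard, hhβ])
  refine ⟨comp_eq_left_of_Im_subset_fixPts ?_, comp_eq_left_of_Im_subset_fixPts ?_,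
    comp_eq_left_of_Im_subset_fixPts ?_⟩
  · rw [← hImα, hF]; exact Set.inter_subset_left
  · rw [← hImβ, hF]; exact Set.inter_subset_right
  · rw [← hImα, hF]; exact Set.inter_subset_right
end

section
/- For two elements α, β of the large Schröder monoid LS_n with |Im α| = |Im β| = p, α L β (i.e., there exist γ₁, γ₂ in LS_n ∪ {id} with α = γ₁β and β = γ₂α) if and only if Im α = Im β and the minima of corresponding kernel classes agree: min(A_i) = min(B_i) for all 1 ≤ i ≤ p, where A_1 < ... < A_p and B_1 < ... < B_p are the kernel classes of α and β respectively. -/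
/-!
Everything is read off the fibres `α⁻¹(a)`. If `α = γ₁β` and `β = γ₂α` with `γ₁, γ₂`
order-decreasing, then every element of `β⁻¹(a)` lies above an element of `α⁻¹(a)`, hence above
its minimum `m`, while `γ₁` sends `m` to an element `y ≤ m` of `β⁻¹(a)`; so `y = m` is the minimum
of `β⁻¹(a)`. Conversely, `β = γα` for the map `γ` sending `x` to the least element of
`α⁻¹(β x)`: it is decreasing because these minima are also the minima of the fibres of `β`, and
isotone because `α` and `β` are.
-/

namespace PT

variable {n : ℕ}

theorem Im_comp_subset (γ β : PT n) : Im (comp γ β) ⊆ Im β := by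
  rintro a ⟨x, hx⟩
  obtain ⟨y, -, hy⟩ := Option.bind_eq_some_iff.mp hx
  exact ⟨y, hy⟩

theorem mem_lowerBounds_fiber_comp {α γ : PT n} (hγ : IsDecreasing γ) {a m : Fin n}
    (hm : m ∈ lowerBounds {x | α x = some a}) :
    m ∈ lowerBounds {x | comp γ α x = some a} := by
  intro x hx
  obtain ⟨y, hxy, hya⟩ := Option.bind_eq_some_iff.mp hx
  exact (hm hya).trans (hγ x y hxy)

theorem isLeast_fiber_of_comp {α β γ₁ γ₂ : PT n} (hγ₁ : IsDecreasing γ₁)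
    (hγ₂ : IsDecreasing γ₂) (h₁ : α = comp γ₁ β) (h₂ : β = comp γ₂ α) {a m : Fin n}
    (hm : IsLeast {x | α x = some a} m) : IsLeast {x | β x = some a} m := by
  have hlower : m ∈ lowerBounds {x | β x = some a} := h₂ ▸ mem_lowerBounds_fiber_comp hγ₂ hm.2
  have hma : comp γ₁ β m = some a := h₁ ▸ hm.1
  obtain ⟨y, hmy, hya⟩ := Option.bind_eq_some_iff.mp hma
  obtain rfl : y = m := le_antisymm (hγ₁ m y hmy) (hlower hya)
  exact ⟨hya, hlower⟩

theorem isLeast_find {p : Fin n → Prop} [DecidablePred p] (h : ∃ k, p k) :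
    IsLeast {x | p x} (Fin.find p h) :=
  ⟨Fin.find_spec h, fun _ => Fin.find_le_of_pos h⟩

def leastPreimage (α : PT n) (a : Fin n) : Option (Fin n) :=
  if h : ∃ x, α x = some a then some (Fin.find _ h) else none

theorem leastPreimage_eq_some_iff {α : PT n} {a m : Fin n} :
    leastPreimage α a = some m ↔ IsLeast {x | α x = some a} m := by
  unfold leastPreimage
  split_ifs with h
  · exact Option.some_inj.trans ⟨fun hm => hm ▸ isLeast_find h, (isLeast_find h).unique⟩
  · exact iff_of_false not_false fun hm => h ⟨m, hm.1⟩

def leftFactor (α β : PT n) : PT n := fun x => (β x).bind (leastPreimage α)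

theorem leftFactor_eq_some_iff {α β : PT n} {x m : Fin n} :
    leftFactor α β x = some m ↔ ∃ a, β x = some a ∧ IsLeast {y | α y = some a} m := by
  simp only [leftFactor, Option.bind_eq_some_iff, leastPreimage_eq_some_iff]

theorem comp_leftFactor {α β : PT n} (h : Im β ⊆ Im α) : comp (leftFactor α β) α = β := by
  funext x
  cases hx : β x with
  | none => simp [comp, leftFactor, hx]
  | some a =>
    have hm := isLeast_find (h ⟨x, hx⟩)
    simp only [comp, leftFactor, hx, Option.bind_some, leastPreimage_eq_some_iff.mpr hm]
    exact hm.1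

theorem leftFactor_isDecreasing {α β : PT n}
    (h : ∀ a m, IsLeast {x | α x = some a} m → m ∈ lowerBounds {x | β x = some a}) :
    IsDecreasing (leftFactor α β) := by
  intro x m hx
  obtain ⟨a, hxa, hm⟩ := leftFactor_eq_some_iff.mp hx
  exact h a m hm hxa

theorem leftFactor_isIsotone {α β : PT n} (hα : IsIsotone α) (hβ : IsIsotone β) :
    IsIsotone (leftFactor α β) := by
  intro x y mx my hx hy hxy
  obtain ⟨a, hxa, hma⟩ := leftFactor_eq_some_iff.mp hx
  obtain ⟨b, hyb, hmb⟩ := leftFactor_eq_some_iff.mp hy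
  have hab : a ≤ b := hβ x y a b hxa hyb hxy
  by_contra! hlt
  obtain rfl : a = b := le_antisymm hab (hα my mx b a hmb.1 hma.1 hlt.le)
  exact hlt.ne (hmb.unique hma)

end PT

open PT in
theorem LS_L_relation_general (n : ℕ) (α β : PT n)
    (hα : α ∈ LS n) (hβ : β ∈ LS n) :
    (∃ γ₁ ∈ LS n, ∃ γ₂ ∈ LS n, α = comp γ₁ β ∧ β = comp γ₂ α) ↔
      (Im α = Im β ∧
        ∀ a ∈ Im α, ∀ m : Fin n,
          (IsLeast {x | α x = some a} m ↔ IsLeast {x | β x = some a} m)) := by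
  constructor
  · rintro ⟨γ₁, hγ₁, γ₂, hγ₂, h₁, h₂⟩
    exact ⟨(h₁ ▸ Im_comp_subset γ₁ β).antisymm (h₂ ▸ Im_comp_subset γ₂ α), fun a _ m =>
      ⟨isLeast_fiber_of_comp hγ₁.2 hγ₂.2 h₁ h₂, isLeast_fiber_of_comp hγ₂.2 hγ₁.2 h₂ h₁⟩⟩
  · rintro ⟨him, hmin⟩
    have hβα : ∀ a m, IsLeast {x | β x = some a} m → m ∈ lowerBounds {x | α x = some a} :=
      fun a m hm => ((hmin a (him.ge ⟨m, hm.1⟩) m).mpr hm).2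
    have hαβ : ∀ a m, IsLeast {x | α x = some a} m → m ∈ lowerBounds {x | β x = some a} :=
      fun a m hm => ((hmin a ⟨m, hm.1⟩ m).mp hm).2
    exact ⟨leftFactor β α, ⟨leftFactor_isIsotone hβ.1 hα.1, leftFactor_isDecreasing hβα⟩,
      leftFactor α β, ⟨leftFactor_isIsotone hα.1 hβ.1, leftFactor_isDecreasing hαβ⟩,
      (comp_leftFactor him.le).symm, (comp_leftFactor him.ge).symm⟩

theorem LS_L_relation (n p : ℕ) (α β : PT n)
    (hα : α ∈ LS n) (hβ : β ∈ LS n)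
    (hhα : height α = p) (hhβ : height β = p) :
    (∃ γ₁ ∈ LS n, ∃ γ₂ ∈ LS n, α = comp γ₁ β ∧ β = comp γ₂ α) ↔
      (Im α = Im β ∧
        ∀ a ∈ Im α, ∀ m : Fin n,
          (IsLeast {x | α x = some a} m ↔ IsLeast {x | β x = some a} m)) :=
  LS_L_relation_general n α β hα hβ
end

section
/- In the large Schröder monoid LS_n, two elements α and β are L*-related if and only if Im α = Im β. -/
/-- The `L*` relation on `LS n` (with quantifiers over `LS n`, which contains the identity). -/
def LStar (n : ℕ) (α β : PT n) : Prop :=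
  ∀ γ ∈ LS n, ∀ δ ∈ LS n, (comp α γ = comp α δ ↔ comp β γ = comp β δ)

/-! Composing on the right only sees the image: `α γ = α δ` iff `γ` and `δ` agree on `Im α`.
So images determine `L*`. Conversely, the identity and the partial identity on `Im α` lie in `LS n`
and agree on `Im α`, so if `α L* β` they agree on `Im β` too, forcing `Im β ⊆ Im α`. -/

lemma comp_eq_comp_iff_eqOn_Im {n : ℕ} (α γ δ : PT n) :
    comp α γ = comp α δ ↔ Set.EqOn γ δ (Im α) := by
  constructor
  · rintro h y ⟨x, hx⟩
    simpa [comp, hx] using congrFun h x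
  · intro h
    funext x
    cases hx : α x with
    | none => simp [comp, hx]
    | some a => simpa [comp, hx] using h ⟨x, hx⟩

open Classical in
noncomputable def idOn {n : ℕ} (s : Set (Fin n)) : PT n := fun x => if x ∈ s then some x else none

lemma idOn_eq_some_iff {n : ℕ} {s : Set (Fin n)} {x y : Fin n} :
    idOn s x = some y ↔ x ∈ s ∧ x = y := by
  unfold idOn
  split_ifs with hx <;> simp [hx]

lemma idOn_mem_LS {n : ℕ} (s : Set (Fin n)) : idOn s ∈ LS n := by
  refine ⟨fun x y a b hx hy hxy => ?_, fun x a hx => ?_⟩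
  · obtain ⟨-, rfl⟩ := idOn_eq_some_iff.mp hx
    obtain ⟨-, rfl⟩ := idOn_eq_some_iff.mp hy
    exact hxy
  · obtain ⟨-, rfl⟩ := idOn_eq_some_iff.mp hx
    exact le_rfl

lemma LStar.symm {n : ℕ} {α β : PT n} (h : LStar n α β) : LStar n β α :=
  fun γ hγ δ hδ => (h γ hγ δ hδ).symm

lemma LStar.Im_subset {n : ℕ} {α β : PT n} (h : LStar n α β) : Im β ⊆ Im α := by
  have hEqOnα : Set.EqOn (idOn Set.univ) (idOn (Im α)) (Im α) := fun y hy => by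
    simp [idOn, hy]
  have hEqOnβ := (comp_eq_comp_iff_eqOn_Im β _ _).mp <|
    (h _ (idOn_mem_LS _) _ (idOn_mem_LS _)).mp <| (comp_eq_comp_iff_eqOn_Im α _ _).mpr hEqOnα
  intro y hy
  have hsome : idOn (Im α) y = some y := by
    rw [← hEqOnβ hy]
    simp [idOn]
  exact (idOn_eq_some_iff.mp hsome).1

theorem LS_Lstar_iff_im_eq_general (n : ℕ) (α β : PT n) :
    LStar n α β ↔ Im α = Im β := by
  refine ⟨fun h => (h.symm.Im_subset).antisymm h.Im_subset, fun h γ _ δ _ => ?_⟩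
  rw [comp_eq_comp_iff_eqOn_Im, comp_eq_comp_iff_eqOn_Im, h]

theorem LS_Lstar_iff_im_eq (n : ℕ) (α β : PT n) (hα : α ∈ LS n) (hβ : β ∈ LS n) :
    LStar n α β ↔ Im α = Im β :=
  LS_Lstar_iff_im_eq_general n α β
end

section
/- In the large Schröder monoid LS_n, every R*-class contains exactly one idempotent; concretely, for each linearly ordered partition P = {A_1 < ... < A_p} of a subset of [n], the unique idempotent with kernel classes P is the map sending each A_i to min A_i. -/
/-!
An idempotent `ε ∈ LS n` fixes every point of its image, and since it is order-decreasing its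
value on a kernel class is a lower bound of that class lying in the class: `ε x` is the least
element of the kernel class of `x`. So `ε` is determined by its kernel. Conversely, for isotone `α`
the map sending `x` to the least element of its `α`-kernel class is an idempotent of `LS n` with
the kernel of `α`; it is isotone because if `x ≤ y` but the least element of the class of `y` lay
below that of `x`, isotonicity of `α` applied to both pairs would force `α x = α y`.
-/

section KernelMin

variable {n : ℕ}

def kerClass (α : PT n) (x : Fin n) : Set (Fin n) := {y | (x, y) ∈ kerS α}

lemma kerS_symm {α : PT n} {x y : Fin n} (h : (x, y) ∈ kerS α) : (y, x) ∈ kerS α :=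
  let ⟨a, hx, hy⟩ := h
  ⟨a, hy, hx⟩

lemma kerS_trans {α : PT n} {x y z : Fin n} (hxy : (x, y) ∈ kerS α) (hyz : (y, z) ∈ kerS α) :
    (x, z) ∈ kerS α := by
  obtain ⟨a, hx, hy⟩ := hxy
  obtain ⟨b, hy', hz⟩ := hyz
  obtain rfl : a = b := Option.some_injective _ (hy.symm.trans hy')
  exact ⟨a, hx, hz⟩

lemma kerClass_eq_of_mem {α : PT n} {x y : Fin n} (h : y ∈ kerClass α x) :
    kerClass α y = kerClass α x :=
  Set.ext fun _ => ⟨kerS_trans h, kerS_trans (kerS_symm h)⟩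

lemma self_mem_kerClass_of_mem {α : PT n} {x y : Fin n} (h : y ∈ kerClass α x) :
    x ∈ kerClass α x :=
  kerS_trans h (kerS_symm h)

lemma exists_isLeast_kerClass {α : PT n} {x y : Fin n} (h : y ∈ kerClass α x) :
    ∃ m, IsLeast (kerClass α x) m :=
  ⟨_, by simpa using (kerClass α x).toFinite.toFinset.isLeast_min' (by simpa using ⟨y, h⟩)⟩

open Classical in
noncomputable def kerMin (α : PT n) : PT n := fun x =>
  if h : ∃ m, IsLeast (kerClass α x) m then some h.choose else none

lemma kerMin_eq_some_iff {α : PT n} {x m : Fin n} :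
    kerMin α x = some m ↔ IsLeast (kerClass α x) m := by
  unfold kerMin
  split_ifs with h
  · exact ⟨fun hm => Option.some_injective _ hm ▸ h.choose_spec,
      fun hm => congrArg some (h.choose_spec.unique hm)⟩
  · exact ⟨nofun, fun hm => (h ⟨m, hm⟩).elim⟩

lemma kerMin_congr {α β : PT n} (h : kerS α = kerS β) : kerMin α = kerMin β := by
  unfold kerMin kerClass
  rw [h]

lemma isIsotone_kerMin {α : PT n} (hα : IsIsotone α) : IsIsotone (kerMin α) := by
  intro x y m m' hm hm' hxy
  rw [kerMin_eq_some_iff] at hm hm'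
  obtain ⟨a, hxa, hma⟩ := hm.1
  obtain ⟨b, hyb, hm'b⟩ := hm'.1
  rcases le_total m m' with hle | hle
  · exact hle
  obtain rfl : a = b := le_antisymm (hα x y a b hxa hyb hxy) (hα m' m b a hm'b hma hle)
  exact hm.2 ⟨a, hxa, hm'b⟩

lemma isDecreasing_kerMin (α : PT n) : IsDecreasing (kerMin α) := fun _ _ hm =>
  have hm := kerMin_eq_some_iff.1 hm
  hm.2 (self_mem_kerClass_of_mem hm.1)

lemma kerMin_mem_LS {α : PT n} (hα : IsIsotone α) : kerMin α ∈ LS n :=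
  ⟨isIsotone_kerMin hα, isDecreasing_kerMin α⟩

lemma comp_kerMin_self (α : PT n) : comp (kerMin α) (kerMin α) = kerMin α := by
  funext x
  cases hx : kerMin α x with
  | none => simp [comp, hx]
  | some m =>
    have hm := kerMin_eq_some_iff.1 hx
    simpa [comp, hx, kerMin_eq_some_iff, kerClass_eq_of_mem hm.1] using hm

lemma kerS_kerMin (α : PT n) : kerS (kerMin α) = kerS α := by
  ext ⟨x, y⟩
  simp only [kerS, kerMin_eq_some_iff]
  constructor
  · rintro ⟨m, hx, hy⟩
    exact kerS_trans hx.1 (kerS_symm hy.1)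
  · intro hxy
    obtain ⟨m, hm⟩ := exists_isLeast_kerClass (self_mem_kerClass_of_mem hxy)
    refine ⟨m, hm, ?_⟩
    rwa [kerClass_eq_of_mem hxy]

lemma eq_kerMin_self_of_idempotent {ε : PT n} (hdec : IsDecreasing ε) (hid : comp ε ε = ε) :
    ε = kerMin ε := by
  have isLeast_of_eq_some {x m : Fin n} (hx : ε x = some m) : IsLeast (kerClass ε x) m := by
    have hm : ε m = some m := by simpa [comp, hx] using congrFun hid x
    refine ⟨⟨m, hx, hm⟩, fun y ⟨b, hxb, hyb⟩ => hdec y m ?_⟩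
    rwa [← Option.some_injective _ (hx.symm.trans hxb)] at hyb
  funext x
  refine Option.ext fun m => ⟨fun hx => kerMin_eq_some_iff.2 (isLeast_of_eq_some hx), fun hm => ?_⟩
  obtain ⟨a, hxa, -⟩ := (kerMin_eq_some_iff.1 hm).1
  rwa [(isLeast_of_eq_some hxa).unique (kerMin_eq_some_iff.1 hm)] at hxa

lemma eq_kerMin_of_kerS_eq {ε α : PT n} (hdec : IsDecreasing ε) (hid : comp ε ε = ε)
    (hker : kerS ε = kerS α) : ε = kerMin α :=
  (eq_kerMin_self_of_idempotent hdec hid).trans (kerMin_congr hker)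

end KernelMin

theorem LS_Rstar_class_unique_idempotent (n : ℕ) (α : PT n) (hα : α ∈ LS n) :
    (∃! ε : PT n, ε ∈ LS n ∧ comp ε ε = ε ∧ kerS ε = kerS α) ∧
      (∀ ε : PT n, ε ∈ LS n → comp ε ε = ε → kerS ε = kerS α →
        ∀ x m : Fin n, IsLeast {y | (x, y) ∈ kerS α} m → ε x = some m) := by
  refine ⟨⟨kerMin α, ⟨kerMin_mem_LS hα.1, comp_kerMin_self α, kerS_kerMin α⟩, ?_⟩, ?_⟩
  · rintro ε ⟨hε, hid, hker⟩
    exact eq_kerMin_of_kerS_eq hε.2 hid hker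
  · intro ε hε hid hker x m hm
    rw [eq_kerMin_of_kerS_eq hε.2 hid hker]
    exact kerMin_eq_some_iff.2 hm
end

section
/- For 1 ≤ p ≤ n−2, every idempotent of the large Schröder monoid LS_n of height p can be written as a product of idempotents of LS_n each of height p+1; consequently, every element of LS_n of height at most p lies in the subsemigroup generated by elements of height exactly p+1. -/
/-- The identity partial transformation. -/
def idPT (n : ℕ) : PT n := fun x => some x

/-- The product of a list of partial transformations (left-to-right composition). -/
def listProd {n : ℕ} (L : List (PT n)) : PT n := L.foldr comp (idPT n)

/-!
If `x` is the largest point moved by `α ∈ LS n`, say to `b`, then `x ∉ Im α` and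
`α = comp α' ε`, where `α'` is `α` with `x` made a fixed point and `ε` is the idempotent of
height `|Im α|` that fixes `Im α` and sends `x` to `b`.

For an idempotent `α` of height `p`, `α'` is an idempotent of height `p + 1`. A point
`c ∉ Im α ∪ {x}`, which exists because `p + 2 ≤ n`, lets one replace `ε` by one or two
idempotents of height `p + 1` that agree with it on `Im α'`. A partial identity of height `p`
is the product of two partial identities of height `p + 1`.

For a partial injection, `α'` is a partial injection of the same height with one moved point
fewer, so by induction `α` is a product of idempotents of its own height. A general `α` is the
idempotent retracting each kernel class onto its least element, followed by the restriction of
`α` to these least elements, which is a partial injection. Raising the height of idempotents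
one step at a time then gives the second claim.
-/

namespace LargeSchroeder

variable {n : ℕ} {α β γ ε σ τ ρ : PT n} {S T : Set (Fin n)} {x y a b e v : Fin n}

theorem comp_idPT (α : PT n) : comp α (idPT n) = α := by
  funext y
  cases h : α y <;> simp [comp, idPT, h]

theorem comp_assoc (α β γ : PT n) : comp (comp α β) γ = comp α (comp β γ) := by
  funext y
  simp only [comp, Option.bind_assoc]
  rfl

theorem listProd_append (L M : List (PT n)) :
    listProd (L ++ M) = comp (listProd L) (listProd M) := by
  induction L with
  | nil => rfl
  | cons α L ih =>
    change comp α (listProd (L ++ M)) = comp (comp α (listProd L)) (listProd M)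
    rw [ih, comp_assoc]

theorem comp_congr_of_eqOn_Im (h : Set.EqOn τ ρ (Im σ)) : comp σ τ = comp σ ρ := by
  funext y
  cases hy : σ y with
  | none => simp [comp, hy]
  | some b => simp [comp, hy, h ⟨y, hy⟩]

inductive IsProductOf (P : PT n → Prop) : PT n → Prop
  | of {α : PT n} : P α → IsProductOf P α
  | comp {α β : PT n} : IsProductOf P α → IsProductOf P β → IsProductOf P (comp α β)

namespace IsProductOf

variable {P Q : PT n → Prop}

theorem trans (h : ∀ β, P β → IsProductOf Q β) (hα : IsProductOf P α) :
    IsProductOf Q α := by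
  induction hα with
  | of hβ => exact h _ hβ
  | comp _ _ ih₁ ih₂ => exact ih₁.comp ih₂

theorem mono (h : ∀ β, P β → Q β) (hα : IsProductOf P α) : IsProductOf Q α :=
  hα.trans fun β hβ => of (h β hβ)

theorem exists_list (hα : IsProductOf P α) :
    ∃ L : List (PT n), L ≠ [] ∧ (∀ η ∈ L, P η) ∧ listProd L = α := by
  induction hα with
  | @of α hα => exact ⟨[α], List.cons_ne_nil _ _, by simpa using hα, comp_idPT α⟩
  | comp _ _ ih₁ ih₂ =>
    obtain ⟨L, hL, hLP, rfl⟩ := ih₁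
    obtain ⟨M, -, hMP, rfl⟩ := ih₂
    refine ⟨L ++ M, by simp [hL], fun η hη => ?_, listProd_append L M⟩
    rcases List.mem_append.mp hη with hη | hη
    exacts [hLP η hη, hMP η hη]

end IsProductOf

def IsIdempotentOfHeight (h : ℕ) (ε : PT n) : Prop :=
  ε ∈ LS n ∧ comp ε ε = ε ∧ height ε = h

theorem comp_self_eq_self_iff : comp ε ε = ε ↔ ∀ e ∈ Im ε, ε e = some e := by
  constructor
  · rintro hidem e ⟨y, hy⟩
    simpa [comp, hy] using congrFun hidem y
  · intro h
    funext y
    cases hy : ε y with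
    | none => simp [comp, hy]
    | some e => simp [comp, hy, h e ⟨y, hy⟩]

open scoped Classical in
noncomputable def partialId (S : Set (Fin n)) : PT n := fun y => if y ∈ S then some y else none

theorem partialId_eq_some : partialId S y = some b ↔ y ∈ S ∧ b = y := by
  unfold partialId
  split_ifs with h <;> simp [h, eq_comm]

theorem partialId_of_mem (hy : y ∈ S) : partialId S y = some y :=
  partialId_eq_some.2 ⟨hy, rfl⟩

theorem partialId_of_notMem (hy : y ∉ S) : partialId S y = none := by
  simp [partialId, hy]

theorem Im_partialId : Im (partialId S) = S := by
  ext b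
  simp [Im, partialId_eq_some]

theorem comp_partialId_partialId : comp (partialId S) (partialId T) = partialId (S ∩ T) := by
  funext y
  by_cases hS : y ∈ S <;> by_cases hT : y ∈ T <;>
    simp [comp, partialId_of_mem, partialId_of_notMem, hS, hT]

theorem isIdempotentOfHeight_partialId (S : Set (Fin n)) :
    IsIdempotentOfHeight S.ncard (partialId S) := by
  refine ⟨⟨?_, ?_⟩, by rw [comp_partialId_partialId, Set.inter_self],
    by rw [height, Im_partialId]⟩
  · intro y y' a a' ha ha' hyy'
    rw [partialId_eq_some] at ha ha'
    rwa [ha.2, ha'.2]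
  · intro y a ha
    exact (partialId_eq_some.1 ha).2.le

theorem update_eq_some :
    Function.update α x (some v) y = some a ↔
      (y = x ∧ a = v) ∨ (y ≠ x ∧ α y = some a) := by
  by_cases hyx : y = x
  · subst hyx
    simp [eq_comm]
  · simp [hyx]

theorem update_partialId_mem_LS (hvx : v ≤ x) (hS : ∀ s ∈ S, s ≤ x → s ≤ v) :
    Function.update (partialId S) x (some v) ∈ LS n := by
  have hval : ∀ y a, Function.update (partialId S) x (some v) y = some a →
      (y = x ∧ a = v) ∨ (y ≠ x ∧ y ∈ S ∧ a = y) := fun y a h => by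
    simpa only [partialId_eq_some] using update_eq_some.1 h
  refine ⟨fun y y' a a' ha ha' hyy' => ?_, fun y a ha => ?_⟩
  · rcases hval y a ha with ⟨rfl, rfl⟩ | ⟨-, hyS, rfl⟩ <;>
      rcases hval y' a' ha' with ⟨rfl, rfl⟩ | ⟨-, -, rfl⟩
    exacts [le_rfl, hvx.trans hyy', hS _ hyS hyy', hyy']
  · rcases hval y a ha with ⟨rfl, rfl⟩ | ⟨-, -, rfl⟩
    exacts [hvx, le_rfl]

theorem Im_update_partialId (hv : v ∈ S) (hx : x ∉ S) :
    Im (Function.update (partialId S) x (some v)) = S := by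
  ext b
  constructor
  · rintro ⟨y, hy⟩
    rcases update_eq_some.1 hy with ⟨-, rfl⟩ | ⟨-, hy⟩
    exacts [hv, (partialId_eq_some.1 hy).2 ▸ (partialId_eq_some.1 hy).1]
  · intro hb
    exact ⟨b, by rw [Function.update_of_ne (ne_of_mem_of_not_mem hb hx), partialId_of_mem hb]⟩

theorem isIdempotentOfHeight_update_partialId (hv : v ∈ S) (hx : x ∉ S) (hvx : v ≤ x)
    (hS : ∀ s ∈ S, s ≤ x → s ≤ v) :
    IsIdempotentOfHeight S.ncard (Function.update (partialId S) x (some v)) := by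
  refine ⟨update_partialId_mem_LS hvx hS, comp_self_eq_self_iff.2 ?_,
    by rw [height, Im_update_partialId hv hx]⟩
  rw [Im_update_partialId hv hx]
  intro e he
  rw [Function.update_of_ne (ne_of_mem_of_not_mem he hx), partialId_of_mem he]

def displaced (α : PT n) : Set (Fin n) := {y | ∃ b, α y = some b ∧ b ≠ y}

theorem eq_partialId_Im (h : displaced α = ∅) : α = partialId (Im α) := by
  have hfix : ∀ y b, α y = some b → b = y := fun y b hyb =>
    by_contra fun hby => Set.eq_empty_iff_forall_notMem.1 h y ⟨b, hyb, hby⟩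
  funext y
  cases hy : α y with
  | none =>
    refine (partialId_of_notMem ?_).symm
    rintro ⟨z, hz⟩
    obtain rfl := hfix z y hz
    exact Option.some_ne_none _ (hz.symm.trans hy)
  | some b =>
    have hby := hfix y b hy
    rw [hby] at hy ⊢
    exact (partialId_of_mem (show y ∈ Im α from ⟨y, hy⟩)).symm

theorem displaced_update_self (α : PT n) (x : Fin n) :
    displaced (Function.update α x (some x)) = displaced α \ {x} := by
  ext y
  by_cases hyx : y = x
  · subst hyx
    simp [displaced]
  · simp [displaced, hyx]

structure IsMaxDisplaced (α : PT n) (x b : Fin n) : Prop where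
  apply_eq : α x = some b
  ne : b ≠ x
  eq_of_lt : ∀ y c, α y = some c → x < y → c = y

theorem exists_isMaxDisplaced (h : (displaced α).Nonempty) : ∃ x b, IsMaxDisplaced α x b := by
  obtain ⟨x, ⟨b, hxb, hbx⟩, hmax⟩ := Set.exists_max_image _ id (Set.toFinite _) h
  refine ⟨x, b, ⟨hxb, hbx, fun y c hyc hxy => ?_⟩⟩
  by_contra hcy
  exact (hmax y ⟨c, hyc, hcy⟩).not_gt hxy

theorem update_self_mem_LS (hα : α ∈ LS n) (hfix : ∀ y c, α y = some c → x < y → c = y) :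
    Function.update α x (some x) ∈ LS n := by
  refine ⟨fun y y' a a' ha ha' hyy' => ?_, fun y a ha => ?_⟩
  · rcases update_eq_some.1 ha with ⟨rfl, rfl⟩ | ⟨-, hya⟩ <;>
      rcases update_eq_some.1 ha' with ⟨rfl, rfl⟩ | ⟨hy'x, hya'⟩
    · exact le_rfl
    · rw [hfix y' a' hya' (hyy'.lt_of_ne (Ne.symm hy'x))]
      exact hyy'
    · exact (hα.2 y a hya).trans hyy'
    · exact hα.1 y y' a a' hya hya' hyy'
  · rcases update_eq_some.1 ha with ⟨rfl, rfl⟩ | ⟨-, hya⟩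
    exacts [le_rfl, hα.2 y a hya]

namespace IsMaxDisplaced

theorem notMem_Im (h : IsMaxDisplaced α x b) (hα : IsDecreasing α) : x ∉ Im α := by
  rintro ⟨y, hy⟩
  rcases (hα y x hy).lt_or_eq with hxy | rfl
  · exact hxy.ne (h.eq_of_lt y x hy hxy)
  · exact h.ne (Option.some_injective _ (h.apply_eq.symm.trans hy))

theorem le_of_mem_Im (h : IsMaxDisplaced α x b) (hα : IsIsotone α) {s : Fin n} (hs : s ∈ Im α)
    (hsx : s ≤ x) : s ≤ b := by
  obtain ⟨y, hy⟩ := hs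
  rcases le_or_gt y x with hyx | hxy
  · exact hα y x s b hy h.apply_eq hyx
  · exact absurd (h.eq_of_lt y s hy hxy ▸ hsx) hxy.not_ge

theorem eq_comp_update (h : IsMaxDisplaced α x b) (hα : IsDecreasing α) :
    α = comp (Function.update α x (some x)) (Function.update (partialId (Im α)) x (some b)) := by
  funext y
  by_cases hyx : y = x
  · subst hyx
    simp [comp, h.apply_eq]
  · simp only [comp, Function.update_of_ne hyx]
    cases hy : α y with
    | none => rfl
    | some e =>
      have he : e ∈ Im α := ⟨y, hy⟩
      simp [Function.update_of_ne (ne_of_mem_of_not_mem he (h.notMem_Im hα)), partialId_of_mem he]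

theorem isIdempotentOfHeight_update_partialId_Im (h : IsMaxDisplaced α x b) (hα : α ∈ LS n) :
    IsIdempotentOfHeight (height α) (Function.update (partialId (Im α)) x (some b)) :=
  isIdempotentOfHeight_update_partialId ⟨x, h.apply_eq⟩ (h.notMem_Im hα.2)
    (hα.2 x b h.apply_eq) fun _ hs => h.le_of_mem_Im hα.1 hs

end IsMaxDisplaced

theorem exists_notMem_of_ncard_lt (h : S.ncard < n) : ∃ c, c ∉ S := by
  obtain ⟨c, -, hc⟩ := Set.exists_mem_notMem_of_ncard_lt_ncard
    (h.trans_eq (by simp [Set.ncard_univ] : n = (Set.univ : Set (Fin n)).ncard))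
  exact ⟨c, hc⟩

theorem isProductOf_partialId_succ (hS : S.ncard + 2 ≤ n) :
    IsProductOf (IsIdempotentOfHeight (S.ncard + 1)) (partialId S) := by
  obtain ⟨c, hc⟩ := exists_notMem_of_ncard_lt (S := S) (by omega)
  obtain ⟨c', hc'⟩ := exists_notMem_of_ncard_lt (S := insert c S)
    (by rw [Set.ncard_insert_of_notMem hc]; omega)
  rw [Set.mem_insert_iff, not_or] at hc'
  have hsplit : partialId S = comp (partialId (insert c S)) (partialId (insert c' S)) := by
    rw [comp_partialId_partialId, Set.insert_inter_of_notMem (by simp [hc, Ne.symm hc'.1]),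
      Set.inter_eq_left.2 (Set.subset_insert c' S)]
  rw [hsplit]
  refine .comp (.of ?_) (.of ?_)
  · simpa [Set.ncard_insert_of_notMem hc] using isIdempotentOfHeight_partialId (insert c S)
  · simpa [Set.ncard_insert_of_notMem hc'.2] using isIdempotentOfHeight_partialId (insert c' S)

theorem exists_isProductOf_eqOn_update_partialId {F : Set (Fin n)} {f : Fin n}
    (hF : F.ncard + 2 ≤ n) (hf : f ∈ F) (hx : x ∉ F) (hfx : f < x)
    (hFx : ∀ s ∈ F, s ≤ x → s ≤ f) :
    ∃ τ, IsProductOf (IsIdempotentOfHeight (F.ncard + 1)) τ ∧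
      Set.EqOn τ (Function.update (partialId F) x (some f)) (insert x F) := by
  obtain ⟨c, hc⟩ := exists_notMem_of_ncard_lt (S := insert x F)
    (by rw [Set.ncard_insert_of_notMem hx]; omega)
  rw [Set.mem_insert_iff, not_or] at hc
  obtain ⟨hcx, hcF⟩ := hc
  have hcard : ∀ {z}, z ∉ F → (insert z F).ncard = F.ncard + 1 := Set.ncard_insert_of_notMem
  have hxcF : x ∉ insert c F := by simp [Ne.symm hcx, hx]
  -- With `c` strictly between `f` and `x`, the map `x ↦ f` fixing `insert c F` is not isotone,
  -- so `x` is sent to `c` first and `c` to `f` afterwards.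
  by_cases hbetween : f < c ∧ c < x
  · refine ⟨comp (Function.update (partialId (insert c F)) x (some c))
      (Function.update (partialId (insert x F)) c (some f)), .comp (.of ?_) (.of ?_), ?_⟩
    · rw [← hcard hcF]
      refine isIdempotentOfHeight_update_partialId (Set.mem_insert c F) hxcF hbetween.2.le ?_
      rintro s (rfl | hs) hsx
      exacts [le_rfl, (hFx s hs hsx).trans hbetween.1.le]
    · rw [← hcard hx]
      refine isIdempotentOfHeight_update_partialId (Set.mem_insert_of_mem x hf) (by simp [hcx, hcF])
        hbetween.1.le ?_
      rintro s (rfl | hs) hsc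
      exacts [absurd hsc hbetween.2.not_ge, hFx s hs (hsc.trans hbetween.2.le)]
    · rintro y (rfl | hy)
      · simp [comp]
      · simp [comp, Function.update_of_ne (ne_of_mem_of_not_mem hy hx),
          Function.update_of_ne (ne_of_mem_of_not_mem hy hcF),
          partialId_of_mem (Set.mem_insert_of_mem _ hy), partialId_of_mem hy]
  · refine ⟨Function.update (partialId (insert c F)) x (some f), .of ?_, ?_⟩
    · rw [← hcard hcF]
      refine isIdempotentOfHeight_update_partialId (Set.mem_insert_of_mem c hf) hxcF hfx.le ?_
      rintro s (rfl | hs) hsx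
      · exact le_of_not_gt fun hfs => hbetween ⟨hfs, hsx.lt_of_ne hcx⟩
      · exact hFx s hs hsx
    · rintro y (rfl | hy)
      · simp
      · simp [Function.update_of_ne (ne_of_mem_of_not_mem hy hx),
          partialId_of_mem (Set.mem_insert_of_mem _ hy), partialId_of_mem hy]

namespace IsMaxDisplaced

theorem update_apply_of_mem_Im_of_comp_self (h : IsMaxDisplaced ε x b) (hε : IsDecreasing ε)
    (hidem : comp ε ε = ε) (he : e ∈ Im ε) : Function.update ε x (some x) e = some e := by
  rw [Function.update_of_ne (ne_of_mem_of_not_mem he (h.notMem_Im hε)),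
    comp_self_eq_self_iff.1 hidem e he]

theorem Im_update_of_comp_self (h : IsMaxDisplaced ε x b) (hε : IsDecreasing ε)
    (hidem : comp ε ε = ε) : Im (Function.update ε x (some x)) = insert x (Im ε) := by
  ext e
  constructor
  · rintro ⟨y, hy⟩
    rcases update_eq_some.1 hy with ⟨-, rfl⟩ | ⟨-, hy⟩
    exacts [Set.mem_insert e _, Set.mem_insert_of_mem x ⟨y, hy⟩]
  · rintro (rfl | he)
    exacts [⟨e, by simp⟩, ⟨e, h.update_apply_of_mem_Im_of_comp_self hε hidem he⟩]

theorem isIdempotentOfHeight_update_of_comp_self (h : IsMaxDisplaced ε x b) (hε : ε ∈ LS n)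
    (hidem : comp ε ε = ε) :
    IsIdempotentOfHeight (height ε + 1) (Function.update ε x (some x)) := by
  have hIm := h.Im_update_of_comp_self hε.2 hidem
  refine ⟨update_self_mem_LS hε h.eq_of_lt, comp_self_eq_self_iff.2 ?_, ?_⟩
  · rw [hIm]
    rintro e (rfl | he)
    exacts [by simp, h.update_apply_of_mem_Im_of_comp_self hε.2 hidem he]
  · rw [height, hIm, Set.ncard_insert_of_notMem (h.notMem_Im hε.2), height]

end IsMaxDisplaced

theorem isProductOf_idempotent_succ {p : ℕ} (hn : p + 2 ≤ n) (hε : IsIdempotentOfHeight p ε) :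
    IsProductOf (IsIdempotentOfHeight (p + 1)) ε := by
  obtain ⟨hLS, hidem, rfl⟩ := hε
  by_cases hdisp : displaced ε = ∅
  · have h := isProductOf_partialId_succ (S := Im ε) hn
    rwa [← eq_partialId_Im hdisp] at h
  obtain ⟨x, f, hmax⟩ := exists_isMaxDisplaced (Set.nonempty_iff_ne_empty.2 hdisp)
  obtain ⟨τ, hτ, hτeq⟩ := exists_isProductOf_eqOn_update_partialId hn ⟨x, hmax.apply_eq⟩
    (hmax.notMem_Im hLS.2) ((hLS.2 x f hmax.apply_eq).lt_of_ne hmax.ne)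
    fun _ hs => hmax.le_of_mem_Im hLS.1 hs
  have h : IsProductOf (IsIdempotentOfHeight (height ε + 1))
      (comp (Function.update ε x (some x)) τ) :=
    .comp (.of (hmax.isIdempotentOfHeight_update_of_comp_self hLS hidem)) hτ
  rwa [comp_congr_of_eqOn_Im (by rwa [hmax.Im_update_of_comp_self hLS.2 hidem]),
    ← hmax.eq_comp_update hLS.2] at h

theorem isProductOf_idempotent_of_le {p q : ℕ} (hqp : q ≤ p) (hn : p + 2 ≤ n)
    (hε : IsIdempotentOfHeight q ε) : IsProductOf (IsIdempotentOfHeight (p + 1)) ε := by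
  induction p, hqp using Nat.le_induction with
  | base => exact isProductOf_idempotent_succ hn hε
  | succ p _ ih => exact (ih (by omega)).trans fun η hη => isProductOf_idempotent_succ hn hη

def PartialInjective (γ : PT n) : Prop :=
  ∀ ⦃y y' b : Fin n⦄, γ y = some b → γ y' = some b → y = y'

theorem PartialInjective.update_self (hγ : PartialInjective γ) (hxIm : x ∉ Im γ) :
    PartialInjective (Function.update γ x (some x)) := by
  intro y y' c hy hy'
  rcases update_eq_some.1 hy with ⟨hyx, hcx⟩ | ⟨-, hyc⟩ <;>
    rcases update_eq_some.1 hy' with ⟨hy'x, hcx⟩ | ⟨-, hy'c⟩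
  · rw [hyx, hy'x]
  · exact absurd ⟨y', hcx ▸ hy'c⟩ hxIm
  · exact absurd ⟨y, hcx ▸ hyc⟩ hxIm
  · exact hγ hyc hy'c

theorem IsMaxDisplaced.height_update_of_partialInjective (h : IsMaxDisplaced γ x b)
    (hγ : IsDecreasing γ) (hinj : PartialInjective γ) :
    height (Function.update γ x (some x)) = height γ := by
  have hbIm : b ∈ Im γ := ⟨x, h.apply_eq⟩
  have hxIm := h.notMem_Im hγ
  have hIm : Im (Function.update γ x (some x)) = insert x (Im γ \ {b}) := by
    ext c
    constructor
    · rintro ⟨y, hy⟩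
      rcases update_eq_some.1 hy with ⟨-, rfl⟩ | ⟨hyx, hy⟩
      · exact Set.mem_insert c _
      · exact Set.mem_insert_of_mem x
          ⟨⟨y, hy⟩, fun hcb => hyx (hinj hy (hcb ▸ h.apply_eq))⟩
    · rintro (rfl | ⟨⟨y, hy⟩, hcb⟩)
      · exact ⟨c, by simp⟩
      · have hyx : y ≠ x := by
          rintro rfl
          exact hcb (Option.some_injective _ (hy.symm.trans h.apply_eq))
        exact ⟨y, by rwa [Function.update_of_ne hyx]⟩
  rw [height, hIm, Set.ncard_insert_of_notMem (fun hx => hxIm hx.1),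
    Set.ncard_sdiff_singleton_add_one hbIm, height]

theorem isProductOf_idempotent_of_partialInjective {γ : PT n} (hγ : γ ∈ LS n)
    (hinj : PartialInjective γ) : IsProductOf (IsIdempotentOfHeight (height γ)) γ := by
  by_cases hdisp : displaced γ = ∅
  · refine .of ⟨hγ, ?_, rfl⟩
    rw [eq_partialId_Im hdisp]
    exact (isIdempotentOfHeight_partialId _).2.1
  obtain ⟨x, b, hmax⟩ := exists_isMaxDisplaced (Set.nonempty_iff_ne_empty.2 hdisp)
  have hdecr : (displaced (Function.update γ x (some x))).ncard < (displaced γ).ncard := by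
    rw [displaced_update_self]
    exact Set.ncard_sdiff_singleton_lt_of_mem ⟨b, hmax.apply_eq, hmax.ne⟩
  have ih := isProductOf_idempotent_of_partialInjective (update_self_mem_LS hγ hmax.eq_of_lt)
    (hinj.update_self (hmax.notMem_Im hγ.2))
  rw [hmax.height_update_of_partialInjective hγ.2 hinj] at ih
  have h := ih.comp (.of (hmax.isIdempotentOfHeight_update_partialId_Im hγ))
  rwa [← hmax.eq_comp_update hγ.2] at h
termination_by (displaced γ).ncard

def classMin (α : PT n) (y : Fin n) : Fin n :=
  (Finset.univ.filter fun z => α z = α y).min' ⟨y, by simp⟩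

theorem apply_classMin (α : PT n) (y : Fin n) : α (classMin α y) = α y :=
  (Finset.mem_filter.1 (Finset.min'_mem (Finset.univ.filter fun z => α z = α y) _)).2

theorem classMin_le {z : Fin n} (h : α z = α y) : classMin α y ≤ z :=
  Finset.min'_le _ _ (by simp [h])

theorem classMin_congr {y' : Fin n} (h : α y = α y') : classMin α y = classMin α y' :=
  le_antisymm (classMin_le (by rw [apply_classMin α y', h]))
    (classMin_le (by rw [apply_classMin α y, h]))

theorem classMin_classMin (α : PT n) (y : Fin n) : classMin α (classMin α y) = classMin α y :=
  classMin_congr (apply_classMin α y)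

def minRep (α : PT n) : PT n := fun y => (α y).map fun _ => classMin α y

def restrictClassMin (α : PT n) : PT n := fun y => if classMin α y = y then α y else none

theorem minRep_eq_some {m : Fin n} :
    minRep α y = some m ↔ ∃ b, α y = some b ∧ classMin α y = m := by
  cases hy : α y <;> simp [minRep, hy]

theorem minRep_mem_LS (hα : α ∈ LS n) : minRep α ∈ LS n := by
  refine ⟨fun y y' m m' hm hm' hyy' => ?_, fun y m hm => ?_⟩
  · obtain ⟨b, hyb, rfl⟩ := minRep_eq_some.1 hm
    obtain ⟨b', hyb', rfl⟩ := minRep_eq_some.1 hm'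
    by_contra hlt
    have hb : b ≤ b' := hα.1 y y' b b' hyb hyb' hyy'
    have hb' : b' ≤ b := hα.1 _ _ b' b (by rw [apply_classMin α, hyb'])
      (by rw [apply_classMin α, hyb]) (le_of_not_ge hlt)
    rw [classMin_congr (hyb.trans ((le_antisymm hb hb') ▸ hyb'.symm))] at hlt
    exact hlt le_rfl
  · obtain ⟨b, -, rfl⟩ := minRep_eq_some.1 hm
    exact classMin_le rfl

theorem comp_minRep_self (α : PT n) : comp (minRep α) (minRep α) = minRep α := by
  refine comp_self_eq_self_iff.2 fun m ⟨y, hy⟩ => ?_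
  obtain ⟨b, hyb, rfl⟩ := minRep_eq_some.1 hy
  exact minRep_eq_some.2 ⟨b, by rw [apply_classMin α, hyb], classMin_classMin α y⟩

theorem height_minRep (α : PT n) : height (minRep α) = height α := by
  let g : Fin n → Fin n := fun m => (α m).getD m
  have hg : ∀ y b, α y = some b → g (classMin α y) = b := fun y b hyb => by
    simp [g, apply_classMin, hyb]
  have hIm : g '' Im (minRep α) = Im α := by
    ext b
    constructor
    · rintro ⟨m, ⟨y, hy⟩, rfl⟩
      obtain ⟨b, hyb, rfl⟩ := minRep_eq_some.1 hy
      exact ⟨y, by rw [hg y b hyb, hyb]⟩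
    · rintro ⟨y, hyb⟩
      exact ⟨classMin α y, ⟨y, minRep_eq_some.2 ⟨b, hyb, rfl⟩⟩, hg y b hyb⟩
  have hinj : Set.InjOn g (Im (minRep α)) := by
    rintro m ⟨y, hy⟩ m' ⟨y', hy'⟩ hgm
    obtain ⟨b, hyb, rfl⟩ := minRep_eq_some.1 hy
    obtain ⟨b', hyb', rfl⟩ := minRep_eq_some.1 hy'
    rw [hg y b hyb, hg y' b' hyb'] at hgm
    exact classMin_congr (by rw [hyb, hyb', hgm])
  rw [height, height, ← hIm, hinj.ncard_image]

theorem restrictClassMin_eq_some :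
    restrictClassMin α y = some b ↔ classMin α y = y ∧ α y = some b := by
  unfold restrictClassMin
  split_ifs with h <;> simp [h]

theorem restrictClassMin_mem_LS (hα : α ∈ LS n) : restrictClassMin α ∈ LS n :=
  ⟨fun y y' b b' hb hb' => hα.1 y y' b b' (restrictClassMin_eq_some.1 hb).2
    (restrictClassMin_eq_some.1 hb').2,
   fun y b hb => hα.2 y b (restrictClassMin_eq_some.1 hb).2⟩

theorem partialInjective_restrictClassMin (α : PT n) : PartialInjective (restrictClassMin α) := by
  intro y y' b hb hb'
  rw [restrictClassMin_eq_some] at hb hb'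
  rw [← hb.1, ← hb'.1, classMin_congr (hb.2.trans hb'.2.symm)]

theorem height_restrictClassMin (α : PT n) : height (restrictClassMin α) = height α := by
  rw [height, height]
  congr 1
  ext b
  constructor
  · rintro ⟨y, hy⟩
    exact ⟨y, (restrictClassMin_eq_some.1 hy).2⟩
  · rintro ⟨y, hy⟩
    exact ⟨classMin α y, restrictClassMin_eq_some.2
      ⟨classMin_classMin α y, by rw [apply_classMin α, hy]⟩⟩

theorem eq_comp_minRep_restrictClassMin (α : PT n) :
    α = comp (minRep α) (restrictClassMin α) := by
  funext y
  cases hy : α y with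
  | none => simp [comp, minRep, hy]
  | some b =>
    have : minRep α y = some (classMin α y) := minRep_eq_some.2 ⟨b, hy, rfl⟩
    simp only [comp, this, Option.bind_some]
    exact (restrictClassMin_eq_some.2
      ⟨classMin_classMin α y, by rw [apply_classMin α, hy]⟩).symm

theorem isProductOf_idempotent_height (hα : α ∈ LS n) :
    IsProductOf (IsIdempotentOfHeight (height α)) α := by
  have h := (IsProductOf.of (P := IsIdempotentOfHeight (height α))
    ⟨minRep_mem_LS hα, comp_minRep_self α, height_minRep α⟩).comp
    (height_restrictClassMin α ▸ isProductOf_idempotent_of_partialInjective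
      (restrictClassMin_mem_LS hα) (partialInjective_restrictClassMin α))
  rwa [← eq_comp_minRep_restrictClassMin] at h

end LargeSchroeder

open LargeSchroeder

theorem LS_idempotents_height_succ (n p : ℕ) (hp : 1 ≤ p) (hpn : p ≤ n - 2) :
    (∀ ε : PT n, ε ∈ LS n → comp ε ε = ε → height ε = p →
      ∃ L : List (PT n), L ≠ [] ∧
        (∀ η ∈ L, η ∈ LS n ∧ comp η η = η ∧ height η = p + 1) ∧
        listProd L = ε) ∧
    (∀ α : PT n, α ∈ LS n → height α ≤ p →
      ∃ L : List (PT n), L ≠ [] ∧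
        (∀ η ∈ L, η ∈ LS n ∧ height η = p + 1) ∧
        listProd L = α) := by
  have hn : p + 2 ≤ n := by omega
  refine ⟨fun ε hε hidem hheight => ?_, fun α hα hheight => ?_⟩
  · exact (isProductOf_idempotent_succ hn ⟨hε, hidem, hheight⟩).exists_list
  · have hidems : IsProductOf (IsIdempotentOfHeight (p + 1)) α :=
      (isProductOf_idempotent_height hα).trans fun η hη =>
        isProductOf_idempotent_of_le hheight hn hη
    exact (hidems.mono fun η hη => ⟨hη.1, hη.2.2⟩).exists_list
end

section
/- The number of idempotents of height exactly p in the large Schröder monoid LS_n equals ∑_{r=p}^{n} C(n,r)·C(r-1,p-1); equivalently, this counts pairs (D, P) where D ⊆ [n] with |D| = r ≥ p and P is a partition of D into p convex (linearly ordered, modulo D) blocks. -/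
/-! An idempotent `ε` of `LS n` is determined by its domain `D` and its set of fixed points
`F = Im ε`: being decreasing and idempotent it sends `x ∈ D` to a fixed point below `x`, and being
isotone it must be the largest such. Conversely, for `F ⊆ D` this rule defines an idempotent of
`LS n` with domain `D` and fixed points `F` exactly when `min D ∈ F`. The height is `#F`, so for
each `D` with `#D = r` there are `C(r - 1, p - 1)` choices of `F`, and summing over `D` gives the
formula. -/

theorem Finset.max_eq_coe_iff {α : Type*} [LinearOrder α] {s : Finset α} {a : α} :
    s.max = a ↔ a ∈ s ∧ ∀ b ∈ s, b ≤ a :=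
  ⟨fun h ↦ ⟨mem_of_max h, fun _ hb ↦ le_max_of_eq hb h⟩, fun ⟨ha, hle⟩ ↦
    le_antisymm (Finset.max_le fun b hb ↦ WithBot.coe_le_coe.2 (hle b hb)) (le_max ha)⟩

namespace LS

open Finset

variable {n : ℕ}

def idempotentsOfHeight (n p : ℕ) : Set (PT n) :=
  {ε | ε ∈ LS n ∧ comp ε ε = ε ∧ height ε = p}

/-- When `F ⊆ D` and every point of `D` lies above a point of `F`, the blocks are the intervals of
`D` starting at the points of `F`, and each block is sent to its minimum. -/
def blockRetraction (D F : Finset (Fin n)) : PT n :=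
  fun x => if x ∈ D then (F.filter (· ≤ x)).max else none

def IsBlockMinima (D F : Finset (Fin n)) : Prop :=
  F ⊆ D ∧ ∀ x ∈ D, ∃ f ∈ F, f ≤ x

instance (D F : Finset (Fin n)) : Decidable (IsBlockMinima D F) :=
  inferInstanceAs (Decidable (_ ∧ _))

def domain (ε : PT n) : Finset (Fin n) := {x | (ε x).isSome}

def fixedPoints (ε : PT n) : Finset (Fin n) := {x | ε x = some x}

section blockRetraction

variable {D F : Finset (Fin n)} {x a : Fin n}

theorem blockRetraction_eq_some_iff :
    blockRetraction D F x = some a ↔ x ∈ D ∧ a ∈ F ∧ a ≤ x ∧ ∀ f ∈ F, f ≤ x → f ≤ a := by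
  by_cases hx : x ∈ D
  · simp only [blockRetraction, hx, true_and]
    refine Finset.max_eq_coe_iff.trans ?_
    simp only [mem_filter, and_imp]
    exact and_assoc
  · simp [blockRetraction, hx]

theorem blockRetraction_self (hF : F ⊆ D) (hx : x ∈ F) : blockRetraction D F x = some x :=
  blockRetraction_eq_some_iff.2 ⟨hF hx, hx, le_rfl, fun _ _ h ↦ h⟩

theorem blockRetraction_isSome_iff (h : IsBlockMinima D F) :
    (blockRetraction D F x).isSome ↔ x ∈ D := by
  refine ⟨fun hx ↦ ?_, fun hx ↦ ?_⟩
  · obtain ⟨a, ha⟩ := Option.isSome_iff_exists.1 hx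
    exact (blockRetraction_eq_some_iff.1 ha).1
  · obtain ⟨f, hf, hfx⟩ := h.2 x hx
    obtain ⟨a, ha⟩ := max_of_nonempty (s := F.filter (· ≤ x)) ⟨f, mem_filter.2 ⟨hf, hfx⟩⟩
    simp only [blockRetraction, hx, ha]
    rfl

theorem blockRetraction_mem_LS : blockRetraction D F ∈ LS n := by
  refine ⟨fun x y a b hx hy hxy ↦ ?_, fun x a hx ↦ (blockRetraction_eq_some_iff.1 hx).2.2.1⟩
  obtain ⟨-, haF, hax, -⟩ := blockRetraction_eq_some_iff.1 hx
  exact (blockRetraction_eq_some_iff.1 hy).2.2.2 a haF (hax.trans hxy)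

theorem comp_blockRetraction_self (hF : F ⊆ D) :
    comp (blockRetraction D F) (blockRetraction D F) = blockRetraction D F := by
  funext x
  cases hx : blockRetraction D F x with
  | none => simp [comp, hx]
  | some a => simp [comp, hx, blockRetraction_self hF (blockRetraction_eq_some_iff.1 hx).2.1]

theorem Im_blockRetraction (hF : F ⊆ D) : Im (blockRetraction D F) = F := by
  ext y
  exact ⟨fun ⟨_, hy⟩ ↦ (blockRetraction_eq_some_iff.1 hy).2.1,
    fun hy ↦ ⟨y, blockRetraction_self hF hy⟩⟩

theorem height_blockRetraction (hF : F ⊆ D) : height (blockRetraction D F) = #F := by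
  rw [height, Im_blockRetraction hF, Set.ncard_coe_finset]

theorem domain_blockRetraction (h : IsBlockMinima D F) : domain (blockRetraction D F) = D := by
  ext x
  simp [domain, blockRetraction_isSome_iff h]

theorem fixedPoints_blockRetraction (hF : F ⊆ D) : fixedPoints (blockRetraction D F) = F := by
  ext x
  simp only [fixedPoints, mem_filter, mem_univ, true_and, blockRetraction_eq_some_iff]
  exact ⟨fun h ↦ h.2.1, fun hx ↦ ⟨hF hx, hx, le_rfl, fun _ _ h ↦ h⟩⟩

end blockRetraction

section idempotent

variable {ε : PT n}

theorem eq_some_self_of_eq_some (hid : comp ε ε = ε) {x a : Fin n} (h : ε x = some a) :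
    ε a = some a := by
  simpa [comp, h] using congrFun hid x

theorem coe_fixedPoints : (fixedPoints ε : Set (Fin n)) = FixPts ε := by
  ext x
  simp [fixedPoints, FixPts]

theorem Im_eq_FixPts (hid : comp ε ε = ε) : Im ε = FixPts ε :=
  Set.ext fun y ↦ ⟨fun ⟨_, hy⟩ ↦ eq_some_self_of_eq_some hid hy, fun hy ↦ ⟨y, hy⟩⟩

theorem height_eq_card_fixedPoints (hid : comp ε ε = ε) : height ε = #(fixedPoints ε) := by
  rw [height, Im_eq_FixPts hid, ← coe_fixedPoints, Set.ncard_coe_finset]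

theorem isBlockMinima_domain_fixedPoints (hdec : IsDecreasing ε) (hid : comp ε ε = ε) :
    IsBlockMinima (domain ε) (fixedPoints ε) := by
  refine ⟨fun f hf ↦ ?_, fun x hx ↦ ?_⟩
  · simp_all [fixedPoints, domain]
  · obtain ⟨a, ha⟩ := Option.isSome_iff_exists.1 (mem_filter.1 hx).2
    exact ⟨a, by simpa [fixedPoints] using eq_some_self_of_eq_some hid ha, hdec x a ha⟩

theorem blockRetraction_domain_fixedPoints (hε : ε ∈ LS n) (hid : comp ε ε = ε) :
    blockRetraction (domain ε) (fixedPoints ε) = ε := by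
  funext x
  cases hx : ε x with
  | none => simp [blockRetraction, domain, hx]
  | some a =>
    refine blockRetraction_eq_some_iff.2 ⟨by simp [domain, hx], ?_, hε.2 x a hx,
      fun f hf hfx ↦ hε.1 f x f a (mem_filter.1 hf).2 hx hfx⟩
    simpa [fixedPoints] using eq_some_self_of_eq_some hid hx

end idempotent

def blockMinimaPairs (n p : ℕ) : Finset (Finset (Fin n) × Finset (Fin n)) :=
  {DF | IsBlockMinima DF.1 DF.2 ∧ #DF.2 = p}

theorem idempotentsOfHeight_eq_image (n p : ℕ) :
    idempotentsOfHeight n p =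
      (fun DF : Finset (Fin n) × Finset (Fin n) ↦ blockRetraction DF.1 DF.2) ''
        blockMinimaPairs n p := by
  ext ε
  constructor
  · rintro ⟨hε, hid, rfl⟩
    refine ⟨(domain ε, fixedPoints ε), ?_, blockRetraction_domain_fixedPoints hε hid⟩
    simp [blockMinimaPairs, isBlockMinima_domain_fixedPoints hε.2 hid,
      height_eq_card_fixedPoints hid]
  · rintro ⟨⟨D, F⟩, hDF, rfl⟩
    obtain ⟨h, rfl⟩ : IsBlockMinima D F ∧ #F = p := by simpa [blockMinimaPairs] using hDF
    exact ⟨blockRetraction_mem_LS, comp_blockRetraction_self h.1, height_blockRetraction h.1⟩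

theorem injOn_blockRetraction (n p : ℕ) :
    Set.InjOn (fun DF : Finset (Fin n) × Finset (Fin n) ↦ blockRetraction DF.1 DF.2)
      (blockMinimaPairs n p) := by
  rintro ⟨D₁, F₁⟩ h₁ ⟨D₂, F₂⟩ h₂ heq
  simp only [blockMinimaPairs, coe_filter, mem_univ, true_and, Set.mem_ofPred_eq] at h₁ h₂ heq
  refine Prod.ext ?_ ?_
  · rw [← domain_blockRetraction h₁.1, heq, domain_blockRetraction h₂.1]
  · rw [← fixedPoints_blockRetraction h₁.1.1, heq, fixedPoints_blockRetraction h₂.1.1]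

theorem isBlockMinima_iff_min'_mem {D F : Finset (Fin n)} (hD : D.Nonempty) :
    IsBlockMinima D F ↔ F ⊆ D ∧ D.min' hD ∈ F := by
  refine ⟨fun ⟨hFD, hF⟩ ↦ ⟨hFD, ?_⟩, fun ⟨hFD, hm⟩ ↦ ⟨hFD, fun x hx ↦ ⟨_, hm, D.min'_le x hx⟩⟩⟩
  obtain ⟨f, hf, hfm⟩ := hF _ (D.min'_mem hD)
  rwa [← le_antisymm hfm (D.min'_le f (hFD hf))]

theorem card_isBlockMinima {p : ℕ} (hp : 1 ≤ p) (D : Finset (Fin n)) :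
    #{F : Finset (Fin n) | IsBlockMinima D F ∧ #F = p} =
      if p ≤ #D then (#D - 1).choose (p - 1) else 0 := by
  split_ifs with hpD
  · have hD : D.Nonempty := card_pos.1 (by omega)
    have : ({F | IsBlockMinima D F ∧ #F = p} : Finset (Finset (Fin n))) =
        (D.powersetCard p).filter ({D.min' hD} ⊆ ·) := by
      ext F
      simp only [mem_filter, mem_univ, true_and, mem_powersetCard, singleton_subset_iff,
        isBlockMinima_iff_min'_mem hD]
      tauto
    rw [this, card_filter_powersetCard_subset _ _ _ (by simpa using D.min'_mem hD)
      (by simpa using hp), card_singleton]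
  · rw [card_eq_zero, filter_eq_empty_iff]
    rintro F - ⟨h, rfl⟩
    exact hpD (card_le_card h.1)

theorem card_blockMinimaPairs {p : ℕ} (hp : 1 ≤ p) :
    #(blockMinimaPairs n p) = ∑ r ∈ Icc p n, n.choose r * (r - 1).choose (p - 1) := by
  have hfibre : #(blockMinimaPairs n p) =
      ∑ D : Finset (Fin n), #{F : Finset (Fin n) | IsBlockMinima D F ∧ #F = p} := by
    simp only [blockMinimaPairs, card_filter, ← univ_product_univ, sum_product]
  calc #(blockMinimaPairs n p)
      = ∑ D ∈ (univ : Finset (Fin n)).powerset,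
          (fun r ↦ if p ≤ r then (r - 1).choose (p - 1) else 0) #D := by
        simp only [powerset_univ, hfibre, card_isBlockMinima hp]
    _ = ∑ r ∈ range (n + 1), n.choose r * if p ≤ r then (r - 1).choose (p - 1) else 0 := by
        rw [sum_powerset_apply_card (fun r ↦ if p ≤ r then (r - 1).choose (p - 1) else 0),
          card_univ, Fintype.card_fin]
        simp only [smul_eq_mul]
    _ = ∑ r ∈ Icc p n, n.choose r * (r - 1).choose (p - 1) := by
        simp only [mul_ite, mul_zero]
        rw [← sum_filter]
        congr 1
        ext r
        simp only [mem_filter, mem_range, mem_Icc]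
        omega

end LS

theorem LS_idempotent_count_general (n p : ℕ) (hp : 1 ≤ p) :
    {ε : PT n | ε ∈ LS n ∧ comp ε ε = ε ∧ height ε = p}.ncard =
      ∑ r ∈ Finset.Icc p n, Nat.choose n r * Nat.choose (r - 1) (p - 1) := by
  rw [← LS.idempotentsOfHeight, LS.idempotentsOfHeight_eq_image,
    (LS.injOn_blockRetraction n p).ncard_image, Set.ncard_coe_finset, LS.card_blockMinimaPairs hp]

theorem LS_idempotent_count (n p : ℕ) (hp : 1 ≤ p) (hpn : p ≤ n) :
    {ε : PT n | ε ∈ LS n ∧ comp ε ε = ε ∧ height ε = p}.ncard =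
      ∑ r ∈ Finset.Icc p n, Nat.choose n r * Nat.choose (r - 1) (p - 1) :=
  LS_idempotent_count_general n p hp
end
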